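/- arXiv:2310.04893 — 3 statements merged into one kernel-verified Lean document; each statement's English description precedes it below -/
import Mathlib

section
/- Let G be a finite simple graph and let S be a nonempty vertex set maximizing the average degree (1/|S|) Σ_{u∈S} deg_S(u). Then for every real p ≤ 1 (p ≠ 0) and every nonempty vertex set T, the p-mean of degrees over S satisfies ((1/|S|) Σ_{u∈S} deg_S(u)^p)^{1/p} ≥ (1/2) · ((1/|T|) Σ_{u∈T} deg_T(u)^p)^{1/p}, provided all degrees involved are positive. In other words, the 1-mean densest subgraph is a 1/2-approximation for the p-mean densest subgraph for all p ≤ 1. -/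
/-!
Let `u` be a vertex of minimum degree in `S`. Deleting it removes `deg_S u` edges, so optimality of
`S` for the average degree forces `deg_S u` to be at least half that average. Every power mean of
the degrees of `S` is at least their minimum `deg_S u`, and for `p ≤ 1` every power mean of the
degrees of `T` is at most their average, which by optimality is at most the average over `S`.
-/

open Finset

variable {V : Type*} [Fintype V] [DecidableEq V]

/-- Degree of `u` in the subgraph of `G` induced by `S`. -/
def degS (G : SimpleGraph V) [DecidableRel G.Adj] (S : Finset V) (u : V) : ℕ :=
  (S.filter (fun v => G.Adj u v)).card

open Real Set

theorem convexOn_rpow_of_nonpos {p : ℝ} (hp : p ≤ 0) :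
    ConvexOn ℝ (Ioi 0) fun x : ℝ ↦ x ^ p := by
  have hlog : ConvexOn ℝ (Ioi 0) fun x ↦ log x * p :=
    (neg_convexOn_iff.2 (strictConcaveOn_log_Ioi.concaveOn.smul (neg_nonneg.2 hp))).congr
      fun x _ ↦ by simp only [Pi.neg_apply, smul_eq_mul]; ring
  refine ⟨convex_Ioi 0, fun x hx y hy a b ha hb hab ↦ ?_⟩
  have hxy : 0 < a • x + b • y := (convex_Ioi 0) hx hy ha hb hab
  simp only [rpow_def_of_pos hx, rpow_def_of_pos hy, rpow_def_of_pos hxy]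
  calc exp (log (a • x + b • y) * p) ≤ exp (a • (log x * p) + b • (log y * p)) :=
        exp_le_exp.2 (hlog.2 hx hy ha hb hab)
    _ ≤ a • exp (log x * p) + b • exp (log y * p) :=
        convexOn_exp.2 (mem_univ _) (mem_univ _) ha hb hab

noncomputable def powerMean {ι : Type*} (s : Finset ι) (f : ι → ℝ) (p : ℝ) : ℝ :=
  ((1 / (s.card : ℝ)) * ∑ i ∈ s, f i ^ p) ^ (1 / p)

section
variable {ι : Type*} {s : Finset ι} {f : ι → ℝ} {p : ℝ}

theorem one_div_card_mul_sum_const (hs : s.Nonempty) (c : ℝ) :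
    (1 / (s.card : ℝ)) * ∑ _i ∈ s, c = c := by
  rw [sum_const, nsmul_eq_mul, ← mul_assoc, one_div_mul_cancel (by simpa using hs.card_pos.ne'),
    one_mul]

theorem one_div_card_mul_sum_pos (hs : s.Nonempty) (hf : ∀ i ∈ s, 0 < f i) :
    0 < (1 / (s.card : ℝ)) * ∑ i ∈ s, f i := by
  have := sum_pos hf hs
  positivity

theorem le_powerMean_of_forall_le {m : ℝ} (hs : s.Nonempty) (hp : p ≠ 0) (hm : 0 < m)
    (hf : ∀ i ∈ s, m ≤ f i) : m ≤ powerMean s f p := by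
  have hfp := one_div_card_mul_sum_pos hs fun i hi ↦ rpow_pos_of_pos (hm.trans_le (hf i hi)) p
  rw [powerMean, one_div p]
  rcases hp.lt_or_gt with hneg | hpos
  · rw [le_rpow_inv_iff_of_neg hm hfp hneg, ← one_div_card_mul_sum_const hs (m ^ p)]
    exact mul_le_mul_of_nonneg_left
      (sum_le_sum fun i hi ↦ rpow_le_rpow_of_nonpos hm (hf i hi) hneg.le) (by positivity)
  · rw [le_rpow_inv_iff_of_pos hm.le hfp.le hpos, ← one_div_card_mul_sum_const hs (m ^ p)]
    exact mul_le_mul_of_nonneg_left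
      (sum_le_sum fun i hi ↦ rpow_le_rpow hm.le (hf i hi) hpos.le) (by positivity)

theorem powerMean_le_arith_mean (hs : s.Nonempty) (hp : p ≤ 1) (hp0 : p ≠ 0)
    (hf : ∀ i ∈ s, 0 < f i) : powerMean s f p ≤ (1 / (s.card : ℝ)) * ∑ i ∈ s, f i := by
  have hw : ∑ _i ∈ s, 1 / (s.card : ℝ) = 1 := by
    simpa only [mul_sum, mul_one] using one_div_card_mul_sum_const hs 1
  have hw0 : ∀ i ∈ s, 0 ≤ 1 / (s.card : ℝ) := fun _ _ ↦ by positivity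
  have hfp := one_div_card_mul_sum_pos hs fun i hi ↦ rpow_pos_of_pos (hf i hi) p
  have hmean := one_div_card_mul_sum_pos hs hf
  rw [powerMean, one_div p]
  rcases hp0.lt_or_gt with hneg | hpos
  · rw [rpow_inv_le_iff_of_neg hfp hmean hneg]
    simpa [mul_sum] using (convexOn_rpow_of_nonpos hneg.le).map_sum_le hw0 hw hf
  · rw [rpow_inv_le_iff_of_pos hfp.le hmean.le hpos]
    simpa [mul_sum] using (concaveOn_rpow hpos.le hp).le_map_sum hw0 hw fun i hi ↦ (hf i hi).le

end

section
omit [Fintype V]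
variable (G : SimpleGraph V) [DecidableRel G.Adj] {S : Finset V} {u : V}

theorem degS_erase_add_ite (hu : u ∈ S) (v : V) :
    degS G (S.erase u) v + (if G.Adj v u then 1 else 0) = degS G S v := by
  simp only [degS, card_filter]
  exact sum_erase_add _ _ hu

theorem sum_degS_erase_add_two_mul (hu : u ∈ S) :
    ∑ v ∈ S.erase u, degS G (S.erase u) v + 2 * degS G S u = ∑ v ∈ S, degS G S v := by
  have hcol : ∑ v ∈ S, (if G.Adj v u then 1 else 0) = degS G S u := by
    simp only [degS, card_filter, G.adj_comm]
  have hself : degS G (S.erase u) u = degS G S u := by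
    simpa using degS_erase_add_ite G hu u
  calc ∑ v ∈ S.erase u, degS G (S.erase u) v + 2 * degS G S u
      = ∑ v ∈ S, degS G (S.erase u) v + degS G S u := by
        rw [← sum_erase_add _ _ hu, hself]; ring
    _ = ∑ v ∈ S, (degS G (S.erase u) v + if G.Adj v u then 1 else 0) := by
        rw [sum_add_distrib, hcol]
    _ = ∑ v ∈ S, degS G S v := sum_congr rfl fun v _ ↦ degS_erase_add_ite G hu v

/-- Deleting `u` removes one vertex and `degS G S u` edges; this would raise the average degree if
`degS G S u` were less than half of it. -/
theorem mean_degS_le_two_mul_degS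
    (hopt : ∀ T : Finset V, T.Nonempty →
      (1 / (T.card : ℝ)) * ∑ v ∈ T, (degS G T v : ℝ) ≤
        (1 / (S.card : ℝ)) * ∑ v ∈ S, (degS G S v : ℝ))
    (hu : u ∈ S) :
    (1 / (S.card : ℝ)) * ∑ v ∈ S, (degS G S v : ℝ) ≤ 2 * degS G S u := by
  have hcard : (S.card : ℝ) = ((S.erase u).card : ℝ) + 1 := by
    exact_mod_cast (card_erase_add_one hu).symm
  have hsum : ∑ v ∈ S, (degS G S v : ℝ) =
      ∑ v ∈ S.erase u, (degS G (S.erase u) v : ℝ) + 2 * (degS G S u : ℝ) := by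
    exact_mod_cast (sum_degS_erase_add_two_mul G hu).symm
  set n : ℝ := ((S.erase u).card : ℝ)
  set e : ℝ := ∑ v ∈ S.erase u, (degS G (S.erase u) v : ℝ)
  set d : ℝ := (degS G S u : ℝ)
  have hd : 0 ≤ d := Nat.cast_nonneg _
  rw [hcard, hsum] at hopt ⊢
  have hkey : e ≤ 2 * d * n := by
    rcases (S.erase u).eq_empty_or_nonempty with hempty | hne
    · simp [e, n, hempty]
    · have hn : 0 < n := by simpa [n] using hne.card_pos
      have := hopt _ hne
      rw [div_mul_eq_mul_div, div_mul_eq_mul_div, div_le_div_iff₀ hn (by positivity)] at this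
      nlinarith
  rw [div_mul_eq_mul_div, div_le_iff₀ (by positivity)]
  nlinarith
end

/-- A subgraph maximizing the average degree is a `1/2`-approximation for the
`p`-mean densest subgraph, for every `p ≤ 1`, `p ≠ 0`. -/
theorem one_mean_half_approx_p_mean (G : SimpleGraph V) [DecidableRel G.Adj]
    (S : Finset V) (hS : S.Nonempty)
    (hopt : ∀ T : Finset V, T.Nonempty →
      (1 / (T.card : ℝ)) * ∑ u ∈ T, (degS G T u : ℝ) ≤
        (1 / (S.card : ℝ)) * ∑ u ∈ S, (degS G S u : ℝ))
    (p : ℝ) (hp : p ≤ 1) (hp0 : p ≠ 0)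
    (T : Finset V) (hT : T.Nonempty)
    (hdS : ∀ u ∈ S, 0 < degS G S u) (hdT : ∀ u ∈ T, 0 < degS G T u) :
    (1 / 2) * ((1 / (T.card : ℝ)) * ∑ u ∈ T, (degS G T u : ℝ) ^ p) ^ (1 / p) ≤
      ((1 / (S.card : ℝ)) * ∑ u ∈ S, (degS G S u : ℝ) ^ p) ^ (1 / p) := by
  obtain ⟨u, huS, hmin⟩ := S.exists_min_image (degS G S) hS
  have hu : (0 : ℝ) < degS G S u := by exact_mod_cast hdS u huS
  have hT_mean : powerMean T (fun v ↦ (degS G T v : ℝ)) p ≤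
      (1 / (T.card : ℝ)) * ∑ v ∈ T, (degS G T v : ℝ) :=
    powerMean_le_arith_mean hT hp hp0 fun v hv ↦ by exact_mod_cast hdT v hv
  have hS_mean := mean_degS_le_two_mul_degS G hopt huS
  have hS_min : (degS G S u : ℝ) ≤ powerMean S (fun v ↦ (degS G S v : ℝ)) p :=
    le_powerMean_of_forall_le hS hp0 hu fun v hv ↦ by exact_mod_cast hmin v hv
  change (1 / 2) * powerMean T _ p ≤ powerMean S _ p
  linarith [hopt T hT]
end

section
/- Let C be a nonempty vertex set in a multilayer graph with layers L, weights w : L → ℝ≥0 with total weight w* > 0, and suppose every v ∈ C has a set of layers of cumulative weight ≥ λ > 0 in which deg_ℓ^C(v) ≥ k (with k ≥ 1). Then for any real p ≥ 1 there exists a layer ℓ such that the p-mean degree density of layer ℓ on C satisfies ((1/|C|) Σ_{u∈C} deg_ℓ^C(u)^p)^{1/p} ≥ (k·λ/w*)^{1/p}. -/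
open Finset

variable {V A : Type*} [Fintype V] [DecidableEq V] [Fintype A] [DecidableEq A]

/-- Degree of `u` within `C` in layer `ℓ` of the multilayer graph `G`. -/
def degL (G : A → SimpleGraph V) [∀ ℓ, DecidableRel (G ℓ).Adj]
    (C : Finset V) (ℓ : A) (u : V) : ℕ :=
  (C.filter (fun v => (G ℓ).Adj u v)).card

/-- If every vertex of a nonempty set `C` has, in layers of cumulative weight `≥ lam > 0`,
induced degree `≥ k ≥ 1`, then for any `p ≥ 1` some layer has `p`-mean degree density
at least `(k·lam/w*)^(1/p)` on `C`. -/
theorem gfirmcore_pmean_layer_density (G : A → SimpleGraph V) [∀ ℓ, DecidableRel (G ℓ).Adj]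
    (w : A → ℝ) (hw : ∀ ℓ : A, 0 ≤ w ℓ)
    (wstar : ℝ) (hwstar : wstar = ∑ ℓ : A, w ℓ) (hwpos : 0 < wstar)
    (C : Finset V) (hC : C.Nonempty) (k : ℕ) (hk : 1 ≤ k)
    (lam : ℝ) (hlam : 0 < lam)
    (hcore : ∀ v ∈ C, ∃ Ls : Finset A, lam ≤ ∑ ℓ ∈ Ls, w ℓ ∧ ∀ ℓ ∈ Ls, k ≤ degL G C ℓ v)
    (p : ℝ) (hp : 1 ≤ p) :
    ∃ ℓ : A, ((k : ℝ) * lam / wstar) ^ (1 / p) ≤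
      ((1 / (C.card : ℝ)) * ∑ u ∈ C, (degL G C ℓ u : ℝ) ^ p) ^ (1 / p) := by
  classical
  set N : A → Finset V := fun ℓ => C.filter (fun v => k ≤ degL G C ℓ v) with hN
  have hp0 : 0 < p := lt_of_lt_of_le one_pos hp
  have hCcard : (0 : ℝ) < C.card := by exact_mod_cast Finset.card_pos.mpr hC
  -- A is nonempty
  have hAne : (Finset.univ : Finset A).Nonempty := by
    by_contra h
    rw [Finset.not_nonempty_iff_eq_empty] at h
    rw [hwstar, h, Finset.sum_empty] at hwpos
    exact lt_irrefl _ hwpos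
  -- key counting inequality
  have key : lam * C.card ≤ ∑ ℓ : A, w ℓ * (N ℓ).card := by
    have hv : ∀ v ∈ C, lam ≤ ∑ ℓ : A, if k ≤ degL G C ℓ v then w ℓ else 0 := by
      intro v hv
      obtain ⟨Ls, hLs, hdeg⟩ := hcore v hv
      calc lam ≤ ∑ ℓ ∈ Ls, w ℓ := hLs
        _ ≤ ∑ ℓ ∈ Finset.univ.filter (fun ℓ => k ≤ degL G C ℓ v), w ℓ := by
            apply Finset.sum_le_sum_of_subset_of_nonneg
            · intro ℓ hℓ
              simp only [Finset.mem_filter, Finset.mem_univ, true_and]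
              exact hdeg ℓ hℓ
            · intros; exact hw _
        _ = ∑ ℓ : A, if k ≤ degL G C ℓ v then w ℓ else 0 := by
            rw [Finset.sum_filter]
    calc lam * C.card = ∑ _v ∈ C, lam := by rw [Finset.sum_const, nsmul_eq_mul]; ring
      _ ≤ ∑ v ∈ C, ∑ ℓ : A, if k ≤ degL G C ℓ v then w ℓ else 0 := Finset.sum_le_sum hv
      _ = ∑ ℓ : A, ∑ v ∈ C, if k ≤ degL G C ℓ v then w ℓ else 0 := Finset.sum_comm
      _ = ∑ ℓ : A, w ℓ * (N ℓ).card := by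
          apply Finset.sum_congr rfl; intro ℓ _
          rw [← Finset.sum_filter, Finset.sum_const, nsmul_eq_mul, mul_comm]
  -- choose layer maximizing (N ℓ).card
  obtain ⟨ℓ₀, -, hmax⟩ := Finset.exists_max_image Finset.univ (fun ℓ => (N ℓ).card) hAne
  refine ⟨ℓ₀, ?_⟩
  have hNcard : lam * C.card ≤ wstar * (N ℓ₀).card := by
    calc lam * C.card ≤ ∑ ℓ : A, w ℓ * (N ℓ).card := key
      _ ≤ ∑ ℓ : A, w ℓ * (N ℓ₀).card := by
          apply Finset.sum_le_sum
          intro ℓ _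
          exact mul_le_mul_of_nonneg_left (by exact_mod_cast hmax ℓ (Finset.mem_univ ℓ)) (hw ℓ)
      _ = wstar * (N ℓ₀).card := by rw [hwstar, Finset.sum_mul]
  -- sum of p-th powers bound
  have hkpos : (0:ℝ) ≤ (k:ℝ) := by positivity
  have hsum : ((N ℓ₀).card : ℝ) * (k : ℝ) ^ p ≤ ∑ u ∈ C, (degL G C ℓ₀ u : ℝ) ^ p := by
    calc ((N ℓ₀).card : ℝ) * (k : ℝ) ^ p = ∑ _u ∈ N ℓ₀, (k:ℝ) ^ p := by
          rw [Finset.sum_const, nsmul_eq_mul]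
      _ ≤ ∑ u ∈ N ℓ₀, (degL G C ℓ₀ u : ℝ) ^ p := by
          apply Finset.sum_le_sum
          intro u hu
          have : k ≤ degL G C ℓ₀ u := (Finset.mem_filter.mp hu).2
          exact Real.rpow_le_rpow hkpos (by exact_mod_cast this) (le_of_lt hp0)
      _ ≤ ∑ u ∈ C, (degL G C ℓ₀ u : ℝ) ^ p := by
          apply Finset.sum_le_sum_of_subset_of_nonneg (Finset.filter_subset _ _)
          intro u _ _
          exact Real.rpow_nonneg (Nat.cast_nonneg _) p
  -- k ≤ k^p
  have hkp : (k:ℝ) ≤ (k:ℝ) ^ p := by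
    have h1 : (1:ℝ) ≤ (k:ℝ) := by exact_mod_cast hk
    calc (k:ℝ) = (k:ℝ) ^ (1:ℝ) := (Real.rpow_one _).symm
      _ ≤ (k:ℝ) ^ p := Real.rpow_le_rpow_of_exponent_le h1 hp
  -- mean bound
  have hkp0 : (0:ℝ) ≤ (k:ℝ)^p := Real.rpow_nonneg hkpos p
  have h2 : (k:ℝ)^p * (lam * C.card) ≤ wstar * ∑ u ∈ C, (degL G C ℓ₀ u : ℝ) ^ p := by
    calc (k:ℝ)^p * (lam * C.card) ≤ (k:ℝ)^p * (wstar * (N ℓ₀).card) :=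
          mul_le_mul_of_nonneg_left hNcard hkp0
      _ = wstar * (((N ℓ₀).card:ℝ) * (k:ℝ)^p) := by ring
      _ ≤ wstar * ∑ u ∈ C, (degL G C ℓ₀ u : ℝ) ^ p :=
          mul_le_mul_of_nonneg_left hsum hwpos.le
  have hmean : (k:ℝ) * lam / wstar ≤ (1 / (C.card : ℝ)) * ∑ u ∈ C, (degL G C ℓ₀ u : ℝ) ^ p := by
    have hstep : (k:ℝ) * lam / wstar ≤ (k:ℝ)^p * lam / wstar := by
      gcongr
    refine le_trans hstep ?_
    rw [div_le_iff₀ hwpos]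
    have hC' : (C.card:ℝ) ≠ 0 := ne_of_gt hCcard
    rw [one_div, ← div_eq_inv_mul, div_mul_eq_mul_div, le_div_iff₀ hCcard] at *
    nlinarith [h2]
  -- conclude via rpow monotonicity
  have hnn : (0:ℝ) ≤ (k:ℝ) * lam / wstar := by positivity
  exact Real.rpow_le_rpow hnn hmean (by positivity)
end

section
/- Let G be a finite simple graph, p ≥ 1 a real, and S a nonempty vertex set maximizing f(S) = (1/|S|) Σ_{u∈S} deg_S(u)^p over all nonempty subsets. Then for every u ∈ S with |S| ≥ 2: deg_S(u)^p + Σ_{v ∈ N_S(u)} (deg_S(v)^p − (deg_S(v) − 1)^p) ≥ f(S), where N_S(u) is the set of neighbors of u inside S. -/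
open Finset

variable {V : Type*} [Fintype V] [DecidableEq V]

/-- Local optimality in a `p`-mean densest subgraph (`p ≥ 1`): for every `u ∈ S`,
the total marginal loss from removing `u` is at least the optimal value `f(S)`. -/
theorem pmean_local_optimality (G : SimpleGraph V) [DecidableRel G.Adj]
    (p : ℝ) (hp : 1 ≤ p)
    (S : Finset V) (hS : S.Nonempty) (hS2 : 2 ≤ S.card)
    (hopt : ∀ T : Finset V, T.Nonempty →
      (1 / (T.card : ℝ)) * ∑ u ∈ T, (degS G T u : ℝ) ^ p ≤
        (1 / (S.card : ℝ)) * ∑ u ∈ S, (degS G S u : ℝ) ^ p)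
    (u : V) (hu : u ∈ S) :
    (1 / (S.card : ℝ)) * ∑ v ∈ S, (degS G S v : ℝ) ^ p ≤
      (degS G S u : ℝ) ^ p +
        ∑ v ∈ S.filter (fun v => G.Adj u v),
          ((degS G S v : ℝ) ^ p - ((degS G S v : ℝ) - 1) ^ p) := by
  classical
  set T := S.erase u with hT
  have hTcard : T.card = S.card - 1 := Finset.card_erase_of_mem hu
  have hTne : T.Nonempty := by
    rw [← Finset.card_pos, hTcard]; omega
  -- degrees in T versus degrees in S
  have hdeg : ∀ w ∈ T, (degS G T w : ℝ) ^ p =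
      if G.Adj u w then ((degS G S w : ℝ) - 1) ^ p else (degS G S w : ℝ) ^ p := by
    intro w hw
    have hfe : T.filter (fun v => G.Adj w v) = (S.filter (fun v => G.Adj w v)).erase u := by
      ext x
      simp only [hT, Finset.mem_erase, Finset.mem_filter]
      tauto
    by_cases h : G.Adj u w
    · have hu' : u ∈ S.filter (fun v => G.Adj w v) := by
        simp [Finset.mem_filter, hu, h.symm]
      have h1 : 1 ≤ degS G S w := Finset.card_pos.mpr ⟨u, hu'⟩
      have hd : degS G T w = degS G S w - 1 := by
        unfold degS; rw [hfe, Finset.card_erase_of_mem hu']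
      rw [if_pos h, hd]
      congr 1
      have : (1:ℕ) ≤ degS G S w := h1
      push_cast [this]
      ring
    · have hu' : u ∉ S.filter (fun v => G.Adj w v) := by
        simp only [Finset.mem_filter, not_and]
        intro _ hadj
        exact h hadj.symm
      have hd : degS G T w = degS G S w := by
        unfold degS; rw [hfe, Finset.erase_eq_of_notMem hu']
      rw [if_neg h, hd]
  -- the sum over T equals the sum over S minus the marginal loss
  have hfilter : S.filter (fun v => G.Adj u v) = T.filter (fun v => G.Adj u v) := by
    ext x
    simp only [hT, Finset.mem_erase, Finset.mem_filter]
    constructor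
    · rintro ⟨hx, hadj⟩; exact ⟨⟨hadj.ne', hx⟩, hadj⟩
    · rintro ⟨⟨_, hx⟩, hadj⟩; exact ⟨hx, hadj⟩
  have key : ∑ w ∈ T, (degS G T w : ℝ) ^ p =
      (∑ w ∈ T, (degS G S w : ℝ) ^ p) -
        ∑ v ∈ S.filter (fun v => G.Adj u v),
          ((degS G S v : ℝ) ^ p - ((degS G S v : ℝ) - 1) ^ p) := by
    rw [hfilter, Finset.sum_filter, ← Finset.sum_sub_distrib]
    apply Finset.sum_congr rfl
    intro w hw
    rw [hdeg w hw]
    by_cases h : G.Adj u w <;> simp [h]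
  have hsplit : (degS G S u : ℝ) ^ p + ∑ w ∈ T, (degS G S w : ℝ) ^ p
      = ∑ w ∈ S, (degS G S w : ℝ) ^ p :=
    Finset.add_sum_erase S (fun w => (degS G S w : ℝ) ^ p) hu
  -- apply optimality to T
  have h := hopt T hTne
  rw [key] at h
  have hn1 : (1:ℕ) ≤ S.card := le_trans (by norm_num) hS2
  have hTc : (T.card : ℝ) = (S.card : ℝ) - 1 := by
    rw [hTcard]; push_cast [hn1]; ring
  set n : ℝ := (S.card : ℝ) with hn
  have hnpos : (0:ℝ) < n := by
    simp only [hn]; exact_mod_cast lt_of_lt_of_le (by norm_num) hS2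
  have hn1pos : (0:ℝ) < n - 1 := by
    have : (2:ℝ) ≤ n := by rw [hn]; exact_mod_cast hS2
    linarith
  set sS : ℝ := ∑ w ∈ S, (degS G S w : ℝ) ^ p with hsS
  set sT : ℝ := ∑ w ∈ T, (degS G S w : ℝ) ^ p with hsT
  set L : ℝ := ∑ v ∈ S.filter (fun v => G.Adj u v),
      ((degS G S v : ℝ) ^ p - ((degS G S v : ℝ) - 1) ^ p) with hL
  rw [hTc] at h
  -- h : 1/(n-1) * (sT - L) ≤ 1/n * sS
  have h1 : sT - L ≤ (n - 1) * ((1/n) * sS) := by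
    have := mul_le_mul_of_nonneg_left h (le_of_lt hn1pos)
    calc sT - L = (n - 1) * ((1/(n-1)) * (sT - L)) := by
          field_simp
      _ ≤ (n - 1) * ((1/n) * sS) := this
  have hq : n * ((1/n) * sS) = sS := by field_simp
  -- hsplit : degu^p + sT = sS
  nlinarith [h1, hq, hsplit]
end
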